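/- For the piecewise function f of the counterexample on B = [−ε,ε]×[−1,1] given by f(x₁,x₂) = x₁(x₁+ε)(x₁−ε)cos(ω x₂), the partial derivative ∂f/∂x₂ = −ω x₁(x₁+ε)(x₁−ε) sin(ω x₂) satisfies ∫_B (∂f/∂x₂)² dx → ∞ as ω → ∞ only at rate O(ω²), while ∫_B (∂f/∂x₁)² dx is bounded uniformly in ω; hence for ω large enough the optimal rank-1 projector on B (minimizing the integrated squared residual gradient) projects onto the x₂-axis. -/

import Mathlib

/-!
Both partial derivatives factor as a polynomial in `x₁` times a trigonometric function of
`ω x₂`, so by Fubini each second moment over `B` is a product of one-dimensional integrals: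
`∫ (∂₁f)² = (8ε⁵/5) ∫₋₁¹ cos²(ωt)` stays bounded, `∫ (∂₂f)² = ω² (16ε⁷/105) ∫₋₁¹ sin²(ωt)` with
`∫₋₁¹ sin²(ωt) = 1 - sin ω cos ω / ω ∈ [1/2, 2]` for `ω ≥ 1`, and the cross moment vanishes
because its `x₁`-factor is odd. A rank-one orthogonal projector `P` of `ℝ²` has trace `1` and
`P₀₀ ≥ 0`, and with a diagonal moment matrix its residual is `(1 - P₀₀) ∫ (∂₁f)² + P₀₀ ∫ (∂₂f)²`,
which is smallest at `P₀₀ = 0` once `∫ (∂₂f)² ≥ ∫ (∂₁f)²`.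
-/

open Matrix MeasureTheory Filter

open Set Real

theorem Matrix.IsIdempotentElem.trace_eq_rank {K : Type*} [Field K] {n : Type*} [Fintype n]
    [DecidableEq n] {P : Matrix n n K} (hP : IsIdempotentElem P) : P.trace = P.rank := by
  have hP' : IsIdempotentElem (toLin' P) := hP.map (toLinAlgEquiv' (R := K) (n := n))
  have h := (LinearMap.IsIdempotentElem.isProj_range _ hP').trace
  rwa [LinearMap.trace_eq_matrix_trace K (Pi.basisFun K n), LinearMap.toMatrix_eq_toMatrix',
    LinearMap.toMatrix'_toLin', toLin'_apply'] at h

theorem Matrix.IsSymm.apply_self_nonneg_of_isIdempotentElem {R : Type*} [CommRing R]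
    [LinearOrder R] [IsStrictOrderedRing R] {n : Type*} [Fintype n] {P : Matrix n n R}
    (hPs : P.IsSymm) (hP : IsIdempotentElem P) (i : n) : 0 ≤ P i i := by
  rw [← hP.eq, mul_apply]
  exact Finset.sum_nonneg fun j _ => hPs.apply i j ▸ mul_self_nonneg (P i j)

theorem Matrix.sum_sq_one_sub_mulVec_fin_two {K : Type*} [CommRing K]
    {P : Matrix (Fin 2) (Fin 2) K} (hP : IsIdempotentElem P) (hPs : P.IsSymm) (htr : P.trace = 1)
    (v : Fin 2 → K) :
    ∑ j, ((1 - P) *ᵥ v) j ^ 2 =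
      (1 - P 0 0) * v 0 ^ 2 + P 0 0 * v 1 ^ 2 - 2 * P 0 1 * (v 0 * v 1) := by
  have h10 : P 1 0 = P 0 1 := hPs.apply 0 1
  have h00 : P 0 0 * P 0 0 + P 0 1 * P 1 0 = P 0 0 := by
    simpa [mul_apply] using congrFun (congrFun hP.eq 0) 0
  have h11 : P 1 0 * P 0 1 + P 1 1 * P 1 1 = P 1 1 := by
    simpa [mul_apply] using congrFun (congrFun hP.eq 1) 1
  rw [trace_fin_two] at htr
  rw [h10] at h00 h11
  simp only [mulVec, dotProduct, sub_apply, one_apply, Fin.sum_univ_two, Fin.isValue, ↓reduceIte,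
    zero_ne_one, one_ne_zero, zero_sub, neg_mul, h10]
  linear_combination v 0 ^ 2 * h00 + v 1 ^ 2 * h11 + (2 * P 0 1 * v 0 * v 1 - v 1 ^ 2) * htr

theorem integral_sum_sq_one_sub_mulVec_le {X : Type*} [MeasurableSpace X] {μ : Measure X}
    {g : X → Fin 2 → ℝ} (hg₀ : Integrable (fun x => g x 0 ^ 2) μ)
    (hg₁ : Integrable (fun x => g x 1 ^ 2) μ) (hg₀₁ : Integrable (fun x => g x 0 * g x 1) μ)
    (hcross : ∫ x, g x 0 * g x 1 ∂μ = 0) (hle : ∫ x, g x 0 ^ 2 ∂μ ≤ ∫ x, g x 1 ^ 2 ∂μ)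
    {P : Matrix (Fin 2) (Fin 2) ℝ} (hP : IsIdempotentElem P) (hPs : P.IsSymm) (hPr : P.rank = 1) :
    ∫ x, ∑ j, ((1 - of ![![0, 0], ![0, 1]]) *ᵥ g x) j ^ 2 ∂μ ≤
      ∫ x, ∑ j, ((1 - P) *ᵥ g x) j ^ 2 ∂μ := by
  have htr : P.trace = 1 := by rw [hP.trace_eq_rank, hPr, Nat.cast_one]
  have hQ (v : Fin 2 → ℝ) : ∑ j, ((1 - of ![![0, 0], ![0, 1]]) *ᵥ v) j ^ 2 = v 0 ^ 2 := by
    simp [mulVec, dotProduct, one_apply]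
  simp_rw [hQ, sum_sq_one_sub_mulVec_fin_two hP hPs htr]
  rw [integral_sub, integral_add, integral_const_mul, integral_const_mul, integral_const_mul,
    hcross]
  · nlinarith [hPs.apply_self_nonneg_of_isIdempotentElem hP 0]
  exacts [hg₀.const_mul _, hg₁.const_mul _, (hg₀.const_mul _).add (hg₁.const_mul _),
    hg₀₁.const_mul _]

theorem setIntegral_fin_two_mul {L : Type*} [RCLike L] (s t : Set ℝ) (F G : ℝ → L) :
    ∫ x in {x : Fin 2 → ℝ | x 0 ∈ s ∧ x 1 ∈ t}, F (x 0) * G (x 1) =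
      (∫ a in s, F a) * ∫ b in t, G b := by
  have hpre :
      MeasurableEquiv.finTwoArrow.symm ⁻¹' {x : Fin 2 → ℝ | x 0 ∈ s ∧ x 1 ∈ t} = s ×ˢ t := by
    ext; simp [MeasurableEquiv.finTwoArrow]
  rw [← (volume_preserving_finTwoArrow ℝ).symm.setIntegral_preimage_emb
    MeasurableEquiv.finTwoArrow.symm.measurableEmbedding, hpre]
  exact setIntegral_prod_mul F G s t

theorem setIntegral_Icc_fin_two_mul {L : Type*} [RCLike L] {a b c d : ℝ} (hab : a ≤ b)
    (hcd : c ≤ d) (F G : ℝ → L) :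
    ∫ x in {x : Fin 2 → ℝ | x 0 ∈ Icc a b ∧ x 1 ∈ Icc c d}, F (x 0) * G (x 1) =
      (∫ s in a..b, F s) * ∫ t in c..d, G t := by
  rw [setIntegral_fin_two_mul, intervalIntegral.integral_of_le hab,
    intervalIntegral.integral_of_le hcd, integral_Icc_eq_integral_Ioc,
    integral_Icc_eq_integral_Ioc]

theorem IsCompact.setOf_fin_two {α : Type*} [TopologicalSpace α] {s t : Set α} (hs : IsCompact s)
    (ht : IsCompact t) : IsCompact {x : Fin 2 → α | x 0 ∈ s ∧ x 1 ∈ t} := by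
  have h : {x : Fin 2 → α | x 0 ∈ s ∧ x 1 ∈ t} = univ.pi ![s, t] := by
    ext; simp [Fin.forall_fin_two]
  exact h ▸ isCompact_univ_pi fun i => by fin_cases i <;> assumption

theorem intervalIntegral.integral_eq_zero_of_odd {E : Type*} [NormedAddCommGroup E]
    [NormedSpace ℝ E] {f : ℝ → E} (hf : ∀ x, f (-x) = -f x) (a : ℝ) : ∫ x in -a..a, f x = 0 := by
  have h := intervalIntegral.integral_comp_neg (a := -a) (b := a) f
  simp only [hf, intervalIntegral.integral_neg, neg_neg] at h
  have h2 : (2 : ℝ) • ∫ x in -a..a, f x = 0 := by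
    rw [two_smul]
    nth_rewrite 1 [← h]
    exact neg_add_cancel _
  exact (smul_eq_zero.mp h2).resolve_left two_ne_zero

theorem integral_sq_le_of_abs_le_one {φ : ℝ → ℝ} (hφ : ∀ t, |φ t| ≤ 1) (a b : ℝ) :
    ∫ t in a..b, φ t ^ 2 ≤ |b - a| := by
  have h := intervalIntegral.norm_integral_le_of_norm_le_const (a := a) (b := b)
    (f := fun t => φ t ^ 2) (C := 1) fun t _ => by
      simpa [abs_pow] using pow_le_one₀ (abs_nonneg _) (hφ t) (n := 2)
  rw [one_mul] at h
  exact (le_abs_self _).trans h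

theorem integral_sin_mul_sq {ω : ℝ} (hω : ω ≠ 0) :
    ∫ t in (-1)..1, sin (ω * t) ^ 2 = 1 - sin ω * cos ω / ω := by
  rw [intervalIntegral.integral_comp_mul_left (fun u => sin u ^ 2) hω, integral_sin_sq]
  simp only [mul_neg, mul_one, sin_neg, cos_neg, smul_eq_mul]
  field_simp
  ring

theorem half_le_integral_sin_mul_sq {ω : ℝ} (hω : 1 ≤ ω) :
    1 / 2 ≤ ∫ t in (-1)..1, sin (ω * t) ^ 2 := by
  rw [integral_sin_mul_sq (by positivity)]
  have : sin ω * cos ω ≤ 1 / 2 := by nlinarith [sq_nonneg (sin ω - cos ω), sin_sq_add_cos_sq ω]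
  have : sin ω * cos ω / ω ≤ 1 / 2 := by rw [div_le_iff₀ (by positivity)]; linarith
  linarith

theorem integral_three_mul_sq_sub_sq_sq (ε : ℝ) :
    ∫ s in (-ε)..ε, (3 * s ^ 2 - ε ^ 2) ^ 2 = 8 * ε ^ 5 / 5 := by
  have hF (s : ℝ) : HasDerivAt (fun s => 9 * s ^ 5 / 5 - 2 * ε ^ 2 * s ^ 3 + ε ^ 4 * s)
      ((3 * s ^ 2 - ε ^ 2) ^ 2) s :=
    ((((hasDerivAt_pow 5 s).const_mul 9).div_const 5).sub ((hasDerivAt_pow 3 s).const_mul _)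
      |>.add ((hasDerivAt_id s).const_mul _)).congr_deriv (by norm_num; ring)
  rw [intervalIntegral.integral_eq_sub_of_hasDerivAt (fun s _ => hF s)
    (Continuous.intervalIntegrable (by fun_prop) _ _)]
  ring

theorem integral_mul_add_mul_sub_sq (ε : ℝ) :
    ∫ s in (-ε)..ε, (s * (s + ε) * (s - ε)) ^ 2 = 16 * ε ^ 7 / 105 := by
  have hF (s : ℝ) : HasDerivAt (fun s => s ^ 7 / 7 - 2 * ε ^ 2 * s ^ 5 / 5 + ε ^ 4 * s ^ 3 / 3)
      ((s * (s + ε) * (s - ε)) ^ 2) s :=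
    (((hasDerivAt_pow 7 s).div_const 7).sub (((hasDerivAt_pow 5 s).const_mul _).div_const 5)
      |>.add (((hasDerivAt_pow 3 s).const_mul _).div_const 3)).congr_deriv (by norm_num; ring)
  rw [intervalIntegral.integral_eq_sub_of_hasDerivAt (fun s _ => hF s)
    (Continuous.intervalIntegrable (by fun_prop) _ _)]
  ring

def middleStrip (ε : ℝ) : Set (Fin 2 → ℝ) := {x | x 0 ∈ Icc (-ε) ε ∧ x 1 ∈ Icc (-1) 1}

theorem isCompact_middleStrip (ε : ℝ) : IsCompact (middleStrip ε) :=
  isCompact_Icc.setOf_fin_two isCompact_Icc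

section middleStrip

variable {ε : ℝ}

theorem setIntegral_middleStrip_sq_deriv₁ (hε : 0 ≤ ε) (ω : ℝ) :
    ∫ x in middleStrip ε, ((3 * x 0 ^ 2 - ε ^ 2) * cos (ω * x 1)) ^ 2 =
      8 * ε ^ 5 / 5 * ∫ t in (-1)..1, cos (ω * t) ^ 2 := by
  simp_rw [mul_pow]
  rw [middleStrip, setIntegral_Icc_fin_two_mul (neg_le_self hε) (by norm_num : (-1 : ℝ) ≤ 1)
    (fun s => (3 * s ^ 2 - ε ^ 2) ^ 2) (fun t => cos (ω * t) ^ 2),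
    integral_three_mul_sq_sub_sq_sq]

theorem setIntegral_middleStrip_sq_deriv₂ (hε : 0 ≤ ε) (ω : ℝ) :
    ∫ x in middleStrip ε, (-ω * (x 0 * (x 0 + ε) * (x 0 - ε)) * sin (ω * x 1)) ^ 2 =
      ω ^ 2 * (16 * ε ^ 7 / 105) * ∫ t in (-1)..1, sin (ω * t) ^ 2 := by
  have h (x : Fin 2 → ℝ) : (-ω * (x 0 * (x 0 + ε) * (x 0 - ε)) * sin (ω * x 1)) ^ 2 =
      ω ^ 2 * (x 0 * (x 0 + ε) * (x 0 - ε)) ^ 2 * sin (ω * x 1) ^ 2 := by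
    ring
  simp_rw [h]
  rw [middleStrip, setIntegral_Icc_fin_two_mul (neg_le_self hε) (by norm_num : (-1 : ℝ) ≤ 1)
    (fun s => ω ^ 2 * (s * (s + ε) * (s - ε)) ^ 2) (fun t => sin (ω * t) ^ 2),
    intervalIntegral.integral_const_mul, integral_mul_add_mul_sub_sq]

theorem setIntegral_middleStrip_deriv₁_mul_deriv₂ (hε : 0 ≤ ε) (ω : ℝ) :
    ∫ x in middleStrip ε, (3 * x 0 ^ 2 - ε ^ 2) * cos (ω * x 1) *
      (-ω * (x 0 * (x 0 + ε) * (x 0 - ε)) * sin (ω * x 1)) = 0 := by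
  have h (x : Fin 2 → ℝ) : (3 * x 0 ^ 2 - ε ^ 2) * cos (ω * x 1) *
      (-ω * (x 0 * (x 0 + ε) * (x 0 - ε)) * sin (ω * x 1)) =
      (3 * x 0 ^ 2 - ε ^ 2) * (-ω * (x 0 * (x 0 + ε) * (x 0 - ε))) *
        (cos (ω * x 1) * sin (ω * x 1)) := by
    ring
  simp_rw [h]
  rw [middleStrip, setIntegral_Icc_fin_two_mul (neg_le_self hε) (by norm_num : (-1 : ℝ) ≤ 1)
    (fun s => (3 * s ^ 2 - ε ^ 2) * (-ω * (s * (s + ε) * (s - ε))))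
    (fun t => cos (ω * t) * sin (ω * t)),
    intervalIntegral.integral_eq_zero_of_odd (fun s => by ring), zero_mul]

theorem setIntegral_middleStrip_sq_deriv₁_le (hε : 0 ≤ ε) (ω : ℝ) :
    ∫ x in middleStrip ε, ((3 * x 0 ^ 2 - ε ^ 2) * cos (ω * x 1)) ^ 2 ≤ 16 * ε ^ 5 / 5 := by
  have hcos := integral_sq_le_of_abs_le_one (fun t => abs_cos_le_one (ω * t)) (-1) 1
  norm_num at hcos
  rw [setIntegral_middleStrip_sq_deriv₁ hε]
  nlinarith [pow_nonneg hε 5]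

theorem mul_sq_le_setIntegral_middleStrip_sq_deriv₂ (hε : 0 ≤ ε) (ω : ℝ) (hω : 1 ≤ ω) :
    8 * ε ^ 7 / 105 * ω ^ 2 ≤
      ∫ x in middleStrip ε, (-ω * (x 0 * (x 0 + ε) * (x 0 - ε)) * sin (ω * x 1)) ^ 2 := by
  have hC : 0 ≤ ω ^ 2 * (16 * ε ^ 7 / 105) := by positivity
  rw [setIntegral_middleStrip_sq_deriv₂ hε]
  nlinarith [mul_le_mul_of_nonneg_left (half_le_integral_sin_mul_sq hω) hC]

theorem setIntegral_middleStrip_sq_deriv₂_le (hε : 0 ≤ ε) (ω : ℝ) :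
    ∫ x in middleStrip ε, (-ω * (x 0 * (x 0 + ε) * (x 0 - ε)) * sin (ω * x 1)) ^ 2 ≤
      32 * ε ^ 7 / 105 * ω ^ 2 := by
  have hsin := integral_sq_le_of_abs_le_one (fun t => abs_sin_le_one (ω * t)) (-1) 1
  norm_num at hsin
  have hC : 0 ≤ ω ^ 2 * (16 * ε ^ 7 / 105) := by positivity
  rw [setIntegral_middleStrip_sq_deriv₂ hε]
  nlinarith [mul_le_mul_of_nonneg_left hsin hC]

end middleStrip

theorem counterexample_middle_strip_gradient_general
    (ε : ℝ) (hε : 0 < ε)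
    (B : Set (Fin 2 → ℝ))
    (hB : B = {x | x 0 ∈ Set.Icc (-ε) ε ∧ x 1 ∈ Set.Icc (-1 : ℝ) 1})
    (d1 d2 : ℝ → (Fin 2 → ℝ) → ℝ)
    (hd1 : ∀ ω x, d1 ω x = (3 * x 0 ^ 2 - ε ^ 2) * Real.cos (ω * x 1))
    (hd2 : ∀ ω x, d2 ω x = -ω * (x 0 * (x 0 + ε) * (x 0 - ε)) * Real.sin (ω * x 1))
    (gradf : ℝ → (Fin 2 → ℝ) → Fin 2 → ℝ)
    (hgrad : ∀ ω x, gradf ω x = ![d1 ω x, d2 ω x])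
    (Q : Matrix (Fin 2) (Fin 2) ℝ)
    (hQ : Q = Matrix.of ![![0, 0], ![0, 1]]) :
    -- ∫_B (∂f/∂x₁)² is bounded uniformly in ω
    (∃ K : ℝ, ∀ ω : ℝ, ∫ x in B, d1 ω x ^ 2 ∂(volume : Measure (Fin 2 → ℝ)) ≤ K) ∧
    -- ∫_B (∂f/∂x₂)² → ∞ as ω → ∞, but only at rate O(ω²)
    Tendsto (fun ω : ℝ => ∫ x in B, d2 ω x ^ 2 ∂(volume : Measure (Fin 2 → ℝ)))
      atTop atTop ∧
    (∃ K : ℝ, ∀ ω : ℝ, 1 ≤ ω →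
      ∫ x in B, d2 ω x ^ 2 ∂(volume : Measure (Fin 2 → ℝ)) ≤ K * ω ^ 2) ∧
    -- for ω large enough, the projector onto the x₂-axis is optimal on B
    (∃ ω₀ : ℝ, ∀ ω : ℝ, ω₀ ≤ ω →
      ∀ P : Matrix (Fin 2) (Fin 2) ℝ, P * P = P → Pᵀ = P → P.rank = 1 →
        ∫ x in B, ∑ j, ((1 - Q) *ᵥ gradf ω x) j ^ 2 ∂(volume : Measure (Fin 2 → ℝ)) ≤
          ∫ x in B, ∑ j, ((1 - P) *ᵥ gradf ω x) j ^ 2 ∂(volume : Measure (Fin 2 → ℝ))) := by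
  obtain rfl : gradf = fun ω x => ![d1 ω x, d2 ω x] := funext₂ hgrad
  obtain rfl : d1 = fun ω x => (3 * x 0 ^ 2 - ε ^ 2) * cos (ω * x 1) := funext₂ hd1
  obtain rfl : d2 = fun ω x => -ω * (x 0 * (x 0 + ε) * (x 0 - ε)) * sin (ω * x 1) := funext₂ hd2
  subst hB hQ
  have htendsto : Tendsto (fun ω => ∫ x in middleStrip ε,
      (-ω * (x 0 * (x 0 + ε) * (x 0 - ε)) * sin (ω * x 1)) ^ 2) atTop atTop :=
    tendsto_atTop_mono' atTop
      ((eventually_ge_atTop 1).mono (mul_sq_le_setIntegral_middleStrip_sq_deriv₂ hε.le))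
      ((tendsto_pow_atTop two_ne_zero).const_mul_atTop (by positivity))
  refine ⟨⟨_, setIntegral_middleStrip_sq_deriv₁_le hε.le⟩, htendsto,
    ⟨_, fun ω _ => setIntegral_middleStrip_sq_deriv₂_le hε.le ω⟩, ?_⟩
  obtain ⟨ω₀, hω₀⟩ := (htendsto.eventually_ge_atTop (16 * ε ^ 5 / 5)).exists_forall_of_atTop
  refine ⟨ω₀, fun ω hω P hP hPs hPr => ?_⟩
  have hintegrable {f : (Fin 2 → ℝ) → ℝ} (hf : Continuous f) : IntegrableOn f (middleStrip ε) :=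
    hf.continuousOn.integrableOn_compact (isCompact_middleStrip ε)
  exact integral_sum_sq_one_sub_mulVec_le (hintegrable (by fun_prop)) (hintegrable (by fun_prop))
    (hintegrable (by fun_prop)) (setIntegral_middleStrip_deriv₁_mul_deriv₂ hε.le ω)
    ((setIntegral_middleStrip_sq_deriv₁_le hε.le ω).trans (hω₀ ω hω)) hP hPs hPr

/-- On `B = [−ε,ε]×[−1,1]` with `f(x₁,x₂) = x₁(x₁+ε)(x₁−ε)cos(ω x₂)`: the integral of
`(∂f/∂x₁)²` over `B` is bounded uniformly in `ω`, the integral of `(∂f/∂x₂)²` tends to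
infinity as `ω → ∞` but only at rate `O(ω²)`, and hence for `ω` large enough the optimal
rank-1 projector on `B` (minimizing the integrated squared residual gradient) is the
projector onto the `x₂`-axis. -/
theorem counterexample_middle_strip_gradient
    (ε : ℝ) (hε : 0 < ε) (hε1 : ε < 1)
    (B : Set (Fin 2 → ℝ))
    (hB : B = {x | x 0 ∈ Set.Icc (-ε) ε ∧ x 1 ∈ Set.Icc (-1 : ℝ) 1})
    (d1 d2 : ℝ → (Fin 2 → ℝ) → ℝ)
    (hd1 : ∀ ω x, d1 ω x = (3 * x 0 ^ 2 - ε ^ 2) * Real.cos (ω * x 1))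
    (hd2 : ∀ ω x, d2 ω x = -ω * (x 0 * (x 0 + ε) * (x 0 - ε)) * Real.sin (ω * x 1))
    (gradf : ℝ → (Fin 2 → ℝ) → Fin 2 → ℝ)
    (hgrad : ∀ ω x, gradf ω x = ![d1 ω x, d2 ω x])
    (Q : Matrix (Fin 2) (Fin 2) ℝ)
    (hQ : Q = Matrix.of ![![0, 0], ![0, 1]]) :
    -- ∫_B (∂f/∂x₁)² is bounded uniformly in ω
    (∃ K : ℝ, ∀ ω : ℝ, ∫ x in B, d1 ω x ^ 2 ∂(volume : Measure (Fin 2 → ℝ)) ≤ K) ∧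
    -- ∫_B (∂f/∂x₂)² → ∞ as ω → ∞, but only at rate O(ω²)
    Tendsto (fun ω : ℝ => ∫ x in B, d2 ω x ^ 2 ∂(volume : Measure (Fin 2 → ℝ)))
      atTop atTop ∧
    (∃ K : ℝ, ∀ ω : ℝ, 1 ≤ ω →
      ∫ x in B, d2 ω x ^ 2 ∂(volume : Measure (Fin 2 → ℝ)) ≤ K * ω ^ 2) ∧
    -- for ω large enough, the projector onto the x₂-axis is optimal on B
    (∃ ω₀ : ℝ, ∀ ω : ℝ, ω₀ ≤ ω →
      ∀ P : Matrix (Fin 2) (Fin 2) ℝ, P * P = P → Pᵀ = P → P.rank = 1 →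
        ∫ x in B, ∑ j, ((1 - Q) *ᵥ gradf ω x) j ^ 2 ∂(volume : Measure (Fin 2 → ℝ)) ≤
          ∫ x in B, ∑ j, ((1 - P) *ᵥ gradf ω x) j ^ 2 ∂(volume : Measure (Fin 2 → ℝ))) :=
  counterexample_middle_strip_gradient_general ε hε B hB d1 d2 hd1 hd2 gradf hgrad Q hQ
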